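/- Let g : ℝⁿ → ℝ ∪ {+∞} be lower semicontinuous and Ω ⊆ ℝⁿ nonempty and closed such that Ω ∩ dom g is unbounded, and suppose the constraint set S = {x ∈ Ω : g(x) ≤ 0} is nonempty. Assume that for every u ∈ Ω^∞ ∩ 𝕊 both ∂^∞g(∞;u) ∩ (−N_Ω(∞;u)) = {0} and 0 ∉ ∂g(∞;u) + N_Ω(∞;u) hold. Then S has an error bound at infinity: there exist α > 0 and R > 0 such that dist(x, S) ≤ α·max{g(x), 0} for all x ∈ Ω with ‖x‖ > R. -/

import Mathlib

open Filter Topology Set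
open scoped RealInnerProductSpace Pointwise

noncomputable section

/-- `ℝⁿ` with the Euclidean structure. -/
abbrev Eu (n : ℕ) := EuclideanSpace ℝ (Fin n)

/-- The Fréchet (regular) normal cone to `Ω ⊆ ℝⁿ` at `xc` (empty when `xc ∉ Ω`):
`v` belongs to it iff `limsup_{x → xc, x ∈ Ω} ⟪v, x - xc⟫ / ‖x - xc‖ ≤ 0`. -/
def frechetNC {n : ℕ} (Ω : Set (Eu n)) (xc : Eu n) : Set (Eu n) :=
  {v | xc ∈ Ω ∧ ∀ ε > 0, ∃ δ > 0, ∀ x ∈ Ω, ‖x - xc‖ < δ →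
        ⟪v, x - xc⟫ ≤ ε * ‖x - xc‖}

/-- `x_k →ᵘ ∞` : `‖x_k‖ → ∞` and `x_k / ‖x_k‖ → u`. -/
def TendstoDirInfty {n : ℕ} (x : ℕ → Eu n) (u : Eu n) : Prop :=
  Tendsto (fun k => ‖x k‖) atTop atTop ∧
  Tendsto (fun k => ‖x k‖⁻¹ • x k) atTop (𝓝 u)

/-- The asymptotic cone of `D`: all `u` such that `x_k / t_k → u` for some
`t_k → +∞` and `x_k ∈ D`. -/
def asymptoticConeEu {n : ℕ} (D : Set (Eu n)) : Set (Eu n) :=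
  {u | ∃ (t : ℕ → ℝ) (x : ℕ → Eu n), Tendsto t atTop atTop ∧ (∀ k, x k ∈ D) ∧
      Tendsto (fun k => (t k)⁻¹ • x k) atTop (𝓝 u)}

/-- The normal cone to `Ω` in direction `u` at infinity:
limits of Fréchet normals along sequences `x_k →^{Ω,u} ∞`. -/
def dirNCInfty {n : ℕ} (Ω : Set (Eu n)) (u : Eu n) : Set (Eu n) :=
  {ξ | ∃ (x w : ℕ → Eu n), (∀ k, x k ∈ Ω) ∧ TendstoDirInfty x u ∧
      (∀ k, w k ∈ frechetNC Ω (x k)) ∧ Tendsto w atTop (𝓝 ξ)}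

/-- The Euclidean norm of `p ∈ ℝⁿ × ℝ`. -/
def pnorm {n : ℕ} (p : Eu n × ℝ) : ℝ := Real.sqrt (‖p.1‖ ^ 2 + p.2 ^ 2)

/-- The Euclidean inner product on `ℝⁿ × ℝ`. -/
def pinner {n : ℕ} (v p : Eu n × ℝ) : ℝ := ⟪v.1, p.1⟫ + v.2 * p.2

/-- The Fréchet (regular) normal cone to `S ⊆ ℝⁿ × ℝ` at `q` (empty when `q ∉ S`). -/
def frechetNCP {n : ℕ} (S : Set (Eu n × ℝ)) (q : Eu n × ℝ) : Set (Eu n × ℝ) :=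
  {w | q ∈ S ∧ ∀ ε > 0, ∃ δ > 0, ∀ p ∈ S, pnorm (p - q) < δ →
        pinner w (p - q) ≤ ε * pnorm (p - q)}

/-- Epigraph of `f : ℝⁿ → ℝ ∪ {+∞}`. -/
def epigraph {n : ℕ} (f : Eu n → EReal) : Set (Eu n × ℝ) := {p | f p.1 ≤ (p.2 : EReal)}

/-- The limiting subdifferential of `f` in direction `u` at infinity:
`ξ` with `(ξ_k, -s_k) ∈ N̂((x_k, r_k); epi f)`, `r_k ≥ f(x_k)`, `x_k →ᵘ ∞`,
`(ξ_k, -s_k) → (ξ, -1)`. -/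
def dirSubdiffInfty {n : ℕ} (f : Eu n → EReal) (u : Eu n) : Set (Eu n) :=
  {ξ | ∃ (x : ℕ → Eu n) (r : ℕ → ℝ) (w : ℕ → Eu n × ℝ),
      TendstoDirInfty x u ∧ (∀ k, f (x k) ≤ ((r k : ℝ) : EReal)) ∧
      (∀ k, w k ∈ frechetNCP (epigraph f) (x k, r k)) ∧
      Tendsto w atTop (𝓝 (ξ, (-1 : ℝ)))}

/-- The singular subdifferential of `f` in direction `u` at infinity. -/
def dirSingSubdiffInfty {n : ℕ} (f : Eu n → EReal) (u : Eu n) : Set (Eu n) :=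
  {ξ | ∃ (x : ℕ → Eu n) (r : ℕ → ℝ) (w : ℕ → Eu n × ℝ),
      TendstoDirInfty x u ∧ (∀ k, f (x k) ≤ ((r k : ℝ) : EReal)) ∧
      (∀ k, w k ∈ frechetNCP (epigraph f) (x k, r k)) ∧
      Tendsto w atTop (𝓝 (ξ, (0 : ℝ)))}

lemma pnorm_nonneg {n : ℕ} (p : Eu n × ℝ) : 0 ≤ pnorm p := Real.sqrt_nonneg _

lemma pnorm_sq {n : ℕ} (p : Eu n × ℝ) : pnorm p ^ 2 = ‖p.1‖ ^ 2 + p.2 ^ 2 :=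
  Real.sq_sqrt (by positivity)

lemma fst_le_pnorm {n : ℕ} (p : Eu n × ℝ) : ‖p.1‖ ≤ pnorm p := by
  exact Real.le_sqrt_of_sq_le (by nlinarith [sq_nonneg p.2])

lemma snd_le_pnorm {n : ℕ} (p : Eu n × ℝ) : |p.2| ≤ pnorm p := by
  rw [pnorm]
  have h := Real.le_sqrt_of_sq_le (x := |p.2|) (y := ‖p.1‖ ^ 2 + p.2 ^ 2) (by rw [sq_abs]; nlinarith [sq_nonneg ‖p.1‖])
  exact h

lemma epi_closed {n : ℕ} {g : Eu n → EReal} (hg : LowerSemicontinuous g) :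
    IsClosed (epigraph g) := by
  have h1 : IsClosed {p : Eu n × EReal | g p.1 ≤ p.2} := hg.isClosed_epigraph
  have : epigraph g =
      (fun p : Eu n × ℝ => (p.1, (p.2 : EReal))) ⁻¹' {p : Eu n × EReal | g p.1 ≤ p.2} := rfl
  rw [this]
  exact h1.preimage (continuous_fst.prodMk (continuous_coe_real_ereal.comp continuous_snd))

lemma frechetNC_smul_mem {n : ℕ} {Ω : Set (Eu n)} {xc v : Eu n} (h : v ∈ frechetNC Ω xc)
    {c : ℝ} (hc : 0 ≤ c) : c • v ∈ frechetNC Ω xc := by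
  obtain ⟨hxc, hv⟩ := h
  refine ⟨hxc, fun ε hε => ?_⟩
  rcases eq_or_lt_of_le hc with rfl | hc
  · exact ⟨1, one_pos, fun x hx _ => by
      rw [zero_smul, inner_zero_left]; positivity⟩
  · obtain ⟨δ, hδ, hb⟩ := hv (ε / c) (div_pos hε hc)
    refine ⟨δ, hδ, fun x hx hlt => ?_⟩
    have h1 := hb x hx hlt
    rw [real_inner_smul_left]
    have h2 : c * ⟪v, x - xc⟫ ≤ c * (ε / c * ‖x - xc‖) :=
      mul_le_mul_of_nonneg_left h1 hc.le
    calc c * ⟪v, x - xc⟫ ≤ c * (ε / c * ‖x - xc‖) := h2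
      _ = ε * ‖x - xc‖ := by field_simp

lemma frechetNCP_smul_mem {n : ℕ} {S : Set (Eu n × ℝ)} {q w : Eu n × ℝ}
    (h : w ∈ frechetNCP S q) {c : ℝ} (hc : 0 ≤ c) :
    (c • w.1, c * w.2) ∈ frechetNCP S q := by
  obtain ⟨hq, hw⟩ := h
  refine ⟨hq, fun ε hε => ?_⟩
  rcases eq_or_lt_of_le hc with rfl | hc
  · refine ⟨1, one_pos, fun p hp _ => ?_⟩
    simp only [pinner, zero_smul, inner_zero_left, zero_mul, add_zero]
    have := pnorm_nonneg (p - q); positivity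
  · obtain ⟨δ, hδ, hb⟩ := hw (ε / c) (div_pos hε hc)
    refine ⟨δ, hδ, fun p hp hlt => ?_⟩
    have h1 := hb p hp hlt
    have h2 : pinner (c • w.1, c * w.2) (p - q) = c * pinner w (p - q) := by
      simp only [pinner, real_inner_smul_left]; ring
    rw [h2]
    calc c * pinner w (p - q) ≤ c * (ε / c * pnorm (p - q)) :=
          mul_le_mul_of_nonneg_left h1 hc.le
      _ = ε * pnorm (p - q) := by field_simp

lemma dir_tendsto {n : ℕ} {x y : ℕ → Eu n} {u : Eu n}
    (hclose : ∀ k, ‖x k - y k‖ ≤ 1)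
    (hy : Tendsto (fun k => ‖y k‖) atTop atTop)
    (hyu : Tendsto (fun k => ‖y k‖⁻¹ • y k) atTop (𝓝 u)) :
    TendstoDirInfty x u := by
  have hnn : ∀ k, ‖y k‖ + (-1) ≤ ‖x k‖ := by
    intro k
    have h1 := abs_norm_sub_norm_le (x k) (y k)
    have := hclose k
    have h2 := abs_le.mp h1
    linarith [h2.1]
  have hxnorm : Tendsto (fun k => ‖x k‖) atTop atTop :=
    tendsto_atTop_mono hnn (tendsto_atTop_add_const_right _ _ hy)
  refine ⟨hxnorm, ?_⟩
  have hinv : Tendsto (fun k => ‖y k‖⁻¹) atTop (𝓝 0) := hy.inv_tendsto_atTop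
  have hz : Tendsto (fun k => ‖y k‖⁻¹ • (x k - y k)) atTop (𝓝 0) := by
    apply squeeze_zero_norm (a := fun k => |‖y k‖⁻¹|) ?_ ?_
    · intro k
      rw [norm_smul]
      calc ‖(‖y k‖⁻¹ : ℝ)‖ * ‖x k - y k‖ ≤ ‖(‖y k‖⁻¹ : ℝ)‖ * 1 :=
            mul_le_mul_of_nonneg_left (hclose k) (norm_nonneg _)
        _ = |‖y k‖⁻¹| := by rw [mul_one]; rfl
    · exact (continuous_abs.tendsto' 0 0 abs_zero).comp hinv
  have h1 : Tendsto (fun k => ‖y k‖⁻¹ • x k) atTop (𝓝 u) := by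
    have := hyu.add hz
    rw [add_zero] at this
    apply this.congr
    intro k
    rw [← smul_add]
    congr 1
    abel
  have h2 : Tendsto (fun k => ‖y k‖ / ‖x k‖) atTop (𝓝 1) := by
    have hd : Tendsto (fun k => ‖y k‖ / ‖x k‖ - 1) atTop (𝓝 0) := by
      apply squeeze_zero_norm' (a := fun k => ‖x k‖⁻¹) ?_ ?_
      · filter_upwards [hxnorm.eventually_ge_atTop 1] with k hk
        have hx0 : (0:ℝ) < ‖x k‖ := lt_of_lt_of_le one_pos hk
        have : ‖y k‖ / ‖x k‖ - 1 = (‖y k‖ - ‖x k‖) / ‖x k‖ := by field_simp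
        rw [this]
        rw [Real.norm_eq_abs, abs_div, abs_of_pos hx0]
        rw [div_le_iff₀ hx0]
        have h3 : |‖y k‖ - ‖x k‖| ≤ ‖x k - y k‖ := by
          rw [abs_sub_comm]; exact abs_norm_sub_norm_le _ _
        have := hclose k
        have : |‖y k‖ - ‖x k‖| ≤ 1 := le_trans h3 this
        calc |‖y k‖ - ‖x k‖| ≤ 1 := this
          _ = ‖x k‖⁻¹ * ‖x k‖ := by field_simp
      · exact hxnorm.inv_tendsto_atTop
    have := hd.add_const 1
    simpa using this
  have h3 : Tendsto (fun k => (‖y k‖ / ‖x k‖) • (‖y k‖⁻¹ • x k)) atTop (𝓝 ((1:ℝ) • u)) :=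
    h2.smul h1
  rw [one_smul] at h3
  apply h3.congr'
  filter_upwards [hy.eventually_ge_atTop 1, hxnorm.eventually_ge_atTop 1] with k hk hk'
  have hy0 : ‖y k‖ ≠ 0 := by positivity
  have hx0 : ‖x k‖ ≠ 0 := by positivity
  rw [smul_smul]
  congr 1
  field_simp

lemma sq_expand {n : ℕ} (a b w : Eu n) :
    ‖a - w‖^2 = ‖b - w‖^2 + 2*⟪b - w, a - b⟫ + ‖a - b‖^2 := by
  have h := norm_add_sq_real (b - w) (a - b)
  have h2 : (b - w) + (a - b) = a - w := by abel
  rw [h2] at h; linarith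

set_option maxHeartbeats 1600000 in
lemma key {n : ℕ} (g : Eu n → EReal) (hg : LowerSemicontinuous g)
    (Ω : Set (Eu n)) (hΩcl : IsClosed Ω)
    (x : Eu n) (hxΩ : x ∈ Ω) (ε d : ℝ) (hε : 0 < ε) (hd : 0 < d)
    (hgx : g x = ((ε : ℝ) : EReal))
    (hsep : ∀ s ∈ Ω, g s ≤ 0 → d ≤ ‖x - s‖)
    (δ : ℝ) (hδ : 0 < δ) :
    ∃ (z v y : Eu n) (t : ℝ) (P A E : Eu n) (B : ℝ),
      g z ≤ ((t : ℝ) : EReal) ∧ v ∈ Ω ∧ y ∈ Ω ∧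
      (-P - A, -1 - B) ∈ frechetNCP (epigraph g) (z, t) ∧
      P - E ∈ frechetNC Ω v ∧
      ‖z - y‖ ≤ δ ∧ ‖v - y‖ ≤ δ ∧ ‖A‖ ≤ 2*δ ∧ |B| ≤ 2*δ ∧
      ‖E‖ ≤ 6*ε/d + 2*δ ∧ ‖x - y‖ ≤ d/2 := by
  set lam := d/2 with hlam
  have hlam0 : 0 < lam := by positivity
  set c := ε / lam^2 with hcdef
  have hc0 : 0 < c := by positivity
  have hεc : c * lam^2 = ε := by rw [hcdef]; field_simp
  -- Step 1 : minimize  t + c‖z-x‖²  over a compact piece of the constrained epigraph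
  set E₀ : Set (Eu n × ℝ) :=
    {p | p.1 ∈ Ω ∧ g p.1 ≤ (p.2 : EReal) ∧ 0 ≤ p.2 ∧ p.2 ≤ ε ∧ ‖p.1 - x‖ ≤ 2*lam} with hE₀def
  have hE₀closed : IsClosed E₀ := by
    have h1 : IsClosed {p : Eu n × ℝ | p.1 ∈ Ω} := hΩcl.preimage continuous_fst
    have h2 : IsClosed {p : Eu n × ℝ | g p.1 ≤ (p.2 : EReal)} := epi_closed hg
    have h3 : IsClosed {p : Eu n × ℝ | 0 ≤ p.2} := isClosed_le continuous_const continuous_snd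
    have h4 : IsClosed {p : Eu n × ℝ | p.2 ≤ ε} := isClosed_le continuous_snd continuous_const
    have h5 : IsClosed {p : Eu n × ℝ | ‖p.1 - x‖ ≤ 2*lam} :=
      isClosed_le ((continuous_fst.sub continuous_const).norm) continuous_const
    exact h1.inter (h2.inter (h3.inter (h4.inter h5)))
  have hE₀cpt : IsCompact E₀ := by
    apply IsCompact.of_isClosed_subset
      ((isCompact_closedBall x (2*lam)).prod isCompact_Icc) hE₀closed
    rintro ⟨z, t⟩ ⟨-, -, h1, h2, h3⟩
    exact ⟨by simpa [Metric.mem_closedBall, dist_eq_norm] using h3, ⟨h1, h2⟩⟩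
  have hE₀ne : E₀.Nonempty := ⟨(x, ε), hxΩ, le_of_eq hgx, hε.le, le_refl _, by rw [sub_self, norm_zero]; positivity⟩
  obtain ⟨⟨y, r⟩, hyrE, hminyr⟩ := hE₀cpt.exists_isMinOn hE₀ne
    ((continuous_snd.add (continuous_const.mul
      ((continuous_fst.sub continuous_const).norm.pow 2))).continuousOn
      (f := fun p : Eu n × ℝ => p.2 + c*‖p.1 - x‖^2))
  obtain ⟨hyΩ, hgyr, hr0, hrε, hyball⟩ := hyrE
  have hmin : ∀ p ∈ E₀, r + c*‖y - x‖^2 ≤ p.2 + c*‖p.1 - x‖^2 := by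
    intro p hp; exact hminyr hp
  have hval : r + c*‖y - x‖^2 ≤ ε := by
    have := hmin (x, ε) ⟨hxΩ, le_of_eq hgx, hε.le, le_refl _, by rw [sub_self, norm_zero]; positivity⟩
    simpa using this
  have hyx : ‖y - x‖ ≤ lam := by
    have h1 : c*‖y - x‖^2 ≤ ε := by linarith
    have h2 : ‖y - x‖^2 ≤ lam^2 := by nlinarith
    nlinarith [norm_nonneg (y - x)]
  -- global minimality property
  have hglob : ∀ z ∈ Ω, ∀ t : ℝ, g z ≤ (t : EReal) → 0 ≤ t →
      r + c*‖y - x‖^2 ≤ t + c*‖z - x‖^2 := by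
    intro z hzΩ t hgz ht0
    by_cases ht : t ≤ ε
    · by_cases hz : ‖z - x‖ ≤ 2*lam
      · exact hmin (z, t) ⟨hzΩ, hgz, ht0, ht, hz⟩
      · push_neg at hz
        have h4 : (2*lam)^2 ≤ ‖z - x‖^2 := by nlinarith [norm_nonneg (z - x)]
        have h5 : c*(2*lam)^2 ≤ c*‖z - x‖^2 := mul_le_mul_of_nonneg_left h4 hc0.le
        nlinarith
    · push_neg at ht
      nlinarith [mul_nonneg hc0.le (sq_nonneg ‖z - x‖)]
  have hrpos : 0 < r := by
    have hynS : ¬ (g y ≤ 0) := by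
      intro h
      have h1 := hsep y hyΩ h
      rw [norm_sub_rev] at h1
      linarith
    have h2 : (0 : EReal) < (r : EReal) := lt_of_lt_of_le (not_le.mp hynS) hgyr
    exact EReal.coe_pos.mp h2
  -- Step 2 : the family of penalized problems
  set η := (min lam r)/2 with hηdef
  have hη0 : 0 < η := by
    have := lt_min hlam0 hrpos
    positivity
  have hηlam : η ≤ lam/2 := by
    have := min_le_left lam r
    rw [hηdef]; linarith
  have hηr : η ≤ r/2 := by
    have := min_le_right lam r
    rw [hηdef]; linarith
  set CC : Set ((Eu n × ℝ) × Eu n) :=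
    {w | g w.1.1 ≤ (w.1.2 : EReal) ∧ ‖w.1.1 - y‖ ≤ η ∧ |w.1.2 - r| ≤ η ∧
      w.2 ∈ Ω ∧ ‖w.2 - y‖ ≤ η} with hCCdef
  have hCCclosed : IsClosed CC := by
    have h1 : IsClosed {w : (Eu n × ℝ) × Eu n | g w.1.1 ≤ (w.1.2 : EReal)} :=
      (epi_closed hg).preimage continuous_fst
    have h2 : IsClosed {w : (Eu n × ℝ) × Eu n | ‖w.1.1 - y‖ ≤ η} :=
      isClosed_le ((continuous_fst.fst.sub continuous_const).norm) continuous_const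
    have h3 : IsClosed {w : (Eu n × ℝ) × Eu n | |w.1.2 - r| ≤ η} :=
      isClosed_le ((continuous_fst.snd.sub continuous_const).abs) continuous_const
    have h4 : IsClosed {w : (Eu n × ℝ) × Eu n | w.2 ∈ Ω} := hΩcl.preimage continuous_snd
    have h5 : IsClosed {w : (Eu n × ℝ) × Eu n | ‖w.2 - y‖ ≤ η} :=
      isClosed_le ((continuous_snd.sub continuous_const).norm) continuous_const
    exact h1.inter (h2.inter (h3.inter (h4.inter h5)))
  have hCCcpt : IsCompact CC := by
    apply IsCompact.of_isClosed_subset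
      (((isCompact_closedBall y η).prod (isCompact_Icc : IsCompact (Icc (r - η) (r + η)))).prod
        (isCompact_closedBall y η)) hCCclosed
    rintro ⟨⟨z, t⟩, v⟩ ⟨-, h2, h3, -, h5⟩
    have h3' := abs_le.mp h3
    refine ⟨⟨by simpa [Metric.mem_closedBall, dist_eq_norm] using h2,
      ⟨by linarith [h3'.1], by linarith [h3'.2]⟩⟩,
      by simpa [Metric.mem_closedBall, dist_eq_norm] using h5⟩
  have hW₀CC : ((y, r), y) ∈ CC := by
    refine ⟨hgyr, by rw [sub_self, norm_zero]; positivity,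
      by rw [sub_self, abs_zero]; positivity, hyΩ,
      by rw [sub_self, norm_zero]; positivity⟩
  have hCCne : CC.Nonempty := ⟨((y, r), y), hW₀CC⟩
  set Φ : ℕ → ((Eu n × ℝ) × Eu n) → ℝ := fun j w =>
    w.1.2 + c*‖w.2 - x‖^2 + ((j:ℝ)+1)*‖w.1.1 - w.2‖^2 + ‖w.1.1 - y‖^2
      + (w.1.2 - r)^2 + ‖w.2 - y‖^2 with hΦdef
  have hΦcont : ∀ j, Continuous (Φ j) := by
    intro j
    apply Continuous.add
    apply Continuous.add
    apply Continuous.add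
    apply Continuous.add
    apply Continuous.add
    · exact continuous_fst.snd
    · exact continuous_const.mul ((continuous_snd.sub continuous_const).norm.pow 2)
    · exact continuous_const.mul
        ((continuous_fst.fst.sub continuous_snd).norm.pow 2)
    · exact ((continuous_fst.fst.sub continuous_const).norm.pow 2)
    · exact ((continuous_fst.snd.sub continuous_const).pow 2)
    · exact ((continuous_snd.sub continuous_const).norm.pow 2)
  have hmins : ∀ j, ∃ w ∈ CC, IsMinOn (Φ j) CC w := fun j =>
    hCCcpt.exists_isMinOn hCCne (hΦcont j).continuousOn
  choose W hWCC hWmin using hmins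
  set m := r + c*‖y - x‖^2 with hmdef
  have hΦW₀ : ∀ j, Φ j ((y, r), y) = m := by
    intro j
    simp only [hΦdef, hmdef, sub_self, norm_zero]
    ring
  have hΦval : ∀ j, Φ j (W j) ≤ m := by
    intro j
    have h2 : Φ j (W j) ≤ Φ j ((y, r), y) := hWmin j hW₀CC
    rwa [hΦW₀ j] at h2
  -- Step 3 : the minimizers converge to ((y,r),y)
  have hK0 : 0 ≤ m - r + η := by
    have h0 : 0 ≤ c*‖y - x‖^2 := by positivity
    rw [hmdef]; linarith
  have hsqbound : ∀ j, ‖(W j).1.1 - (W j).2‖^2 ≤ (m - r + η)/((j:ℝ)+1) := by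
    intro j
    have h1 := hΦval j
    obtain ⟨hW1, hW2, hW3, hW4, hW5⟩ := hWCC j
    have h3' := abs_le.mp hW3
    have hnn1 : 0 ≤ c*‖(W j).2 - x‖^2 := by positivity
    have hnn2 : 0 ≤ ‖(W j).1.1 - y‖^2 := sq_nonneg _
    have hnn3 : 0 ≤ ((W j).1.2 - r)^2 := sq_nonneg _
    have hnn4 : 0 ≤ ‖(W j).2 - y‖^2 := sq_nonneg _
    have hj1 : (0:ℝ) < (j:ℝ)+1 := by positivity
    rw [le_div_iff₀ hj1]
    simp only [hΦdef] at h1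
    linarith [h3'.1]
  have hWtend : Tendsto W atTop (𝓝 ((y, r), y)) := by
    apply tendsto_of_subseq_tendsto
    intro ns hns
    obtain ⟨L, hLCC, φ, hφmono, hφconv⟩ := hCCcpt.tendsto_subseq (fun k => hWCC (ns k))
    have hι : Tendsto (fun k => ns (φ k)) atTop atTop := hns.comp hφmono.tendsto_atTop
    have hz_v : L.1.1 = L.2 := by
      have hcont : Continuous (fun w : (Eu n × ℝ) × Eu n => ‖w.1.1 - w.2‖^2) :=
        (continuous_fst.fst.sub continuous_snd).norm.pow 2
      have h1 : Tendsto (fun k => ‖(W (ns (φ k))).1.1 - (W (ns (φ k))).2‖^2) atTop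
          (𝓝 (‖L.1.1 - L.2‖^2)) := (hcont.tendsto L).comp hφconv
      have h2 : Tendsto (fun k => (m - r + η)/((ns (φ k) : ℝ)+1)) atTop (𝓝 0) := by
        have h3 : Tendsto (fun j : ℕ => ((j:ℝ)+1)) atTop atTop :=
          tendsto_atTop_add_const_right _ _ tendsto_natCast_atTop_atTop
        have h4 : Tendsto (fun j : ℕ => (m - r + η)*((j:ℝ)+1)⁻¹) atTop (𝓝 0) := by
          have h5 := (tendsto_const_nhds (x := m - r + η) (f := atTop (α := ℕ))).mul
            h3.inv_tendsto_atTop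
          simpa using h5
        have h5 := h4.comp hι
        simpa [div_eq_mul_inv, Function.comp_def] using h5
      have h6 : ‖L.1.1 - L.2‖^2 ≤ 0 :=
        le_of_tendsto_of_tendsto' h1 h2 (fun k => hsqbound (ns (φ k)))
      have h7 : ‖L.1.1 - L.2‖^2 = 0 := le_antisymm h6 (sq_nonneg _)
      have h8 : ‖L.1.1 - L.2‖ = 0 := by
        have := sq_eq_zero_iff.mp h7
        exact this
      rwa [norm_sub_eq_zero_iff] at h8
    obtain ⟨hL1, hL2, hL3, hL4, hL5⟩ := hLCC
    have hL3' := abs_le.mp hL3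
    have hvlim : L.1.2 + c*‖L.2 - x‖^2 + ‖L.1.1 - y‖^2 + (L.1.2 - r)^2 + ‖L.2 - y‖^2 ≤ m := by
      have hcontF : Continuous (fun w : (Eu n × ℝ) × Eu n =>
          w.1.2 + c*‖w.2 - x‖^2 + ‖w.1.1 - y‖^2 + (w.1.2 - r)^2 + ‖w.2 - y‖^2) := by
        apply Continuous.add
        apply Continuous.add
        apply Continuous.add
        apply Continuous.add
        · exact continuous_fst.snd
        · exact continuous_const.mul ((continuous_snd.sub continuous_const).norm.pow 2)
        · exact ((continuous_fst.fst.sub continuous_const).norm.pow 2)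
        · exact ((continuous_fst.snd.sub continuous_const).pow 2)
        · exact ((continuous_snd.sub continuous_const).norm.pow 2)
      have h1 := (hcontF.tendsto L).comp hφconv
      apply le_of_tendsto h1
      apply Eventually.of_forall
      intro k
      have h2 := hΦval (ns (φ k))
      simp only [hΦdef] at h2
      have hnn : 0 ≤ ((ns (φ k):ℝ)+1)*‖(W (ns (φ k))).1.1 - (W (ns (φ k))).2‖^2 := by positivity
      simp only [Function.comp]
      linarith
    have hLup : m ≤ L.1.2 + c*‖L.1.1 - x‖^2 := by
      apply hglob L.1.1 (by rw [hz_v]; exact hL4) L.1.2 hL1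
      linarith [hL3'.1, hηr, hrpos]
    have hzero : ‖L.2 - y‖^2 + (L.1.2 - r)^2 ≤ 0 := by
      rw [hz_v] at hvlim hLup
      linarith [sq_nonneg ‖L.2 - y‖]
    have hLeq : L = ((y, r), y) := by
      have e3 : L.2 = y := by
        have h1 : ‖L.2 - y‖^2 = 0 := by
          nlinarith [sq_nonneg ‖L.2 - y‖, sq_nonneg (L.1.2 - r)]
        have h2 := sq_eq_zero_iff.mp h1
        rwa [norm_sub_eq_zero_iff] at h2
      have e1 : L.1.1 = y := hz_v.trans e3
      have e2 : L.1.2 = r := by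
        have h1 : (L.1.2 - r)^2 = 0 := by
          nlinarith [sq_nonneg ‖L.2 - y‖, sq_nonneg (L.1.2 - r)]
        have h2 := sq_eq_zero_iff.mp h1
        linarith
      have h3 : L = ((L.1.1, L.1.2), L.2) := by simp
      rw [h3, e1, e2, e3]
    exact ⟨φ, by rwa [hLeq] at hφconv⟩
  -- Step 4 : choose a good index and derive the normal-cone elements
  set θ := min (η/2) δ with hθdef
  have hθ0 : 0 < θ := lt_min (by positivity) hδ
  have hθη : θ ≤ η/2 := min_le_left _ _
  have hθδ : θ ≤ δ := min_le_right _ _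
  obtain ⟨j, hj⟩ : ∃ j, dist (W j) ((y, r), y) < θ := by
    obtain ⟨N, hN⟩ := Metric.tendsto_atTop.mp hWtend θ hθ0
    exact ⟨N, hN N le_rfl⟩
  rw [Prod.dist_eq] at hj
  have hj1 := max_lt_iff.mp hj
  rw [Prod.dist_eq] at hj1
  have hj2 := max_lt_iff.mp hj1.1
  have hzy : ‖(W j).1.1 - y‖ < θ := by
    have := hj2.1; rwa [dist_eq_norm] at this
  have htr : |(W j).1.2 - r| < θ := by
    have := hj2.2; rwa [Real.dist_eq] at this
  have hvy : ‖(W j).2 - y‖ < θ := by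
    have := hj1.2; rwa [dist_eq_norm] at this
  obtain ⟨hWj1, hWj2, hWj3, hWj4, hWj5⟩ := hWCC j
  set zb := (W j).1.1 with hzbdef
  set tb := (W j).1.2 with htbdef
  set vb := (W j).2 with hvbdef
  have hρ0 : 0 < (j:ℝ)+1 := by positivity
  have hWjeta : ((zb, tb), vb) = W j := by simp [hzbdef, htbdef, hvbdef]
  refine ⟨zb, vb, y, tb, (2*((j:ℝ)+1)) • (zb - vb), (2:ℝ) • (zb - y),
    (2*c) • (vb - x) + (2:ℝ) • (vb - y), 2*(tb - r), hWj1, hWj4, hyΩ, ?_, ?_, ?_, ?_, ?_, ?_, ?_, ?_⟩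
  · -- frechetNCP membership
    refine ⟨hWj1, ?_⟩
    intro ε' hε'
    refine ⟨min (η/2) (ε'/((j:ℝ)+2)), lt_min (by positivity) (by positivity), ?_⟩
    intro p hp hplt
    have hq0 := pnorm_nonneg (p - (zb, tb))
    have hd1 : ‖p.1 - zb‖ ≤ pnorm (p - (zb, tb)) := by
      have := fst_le_pnorm (p - (zb, tb)); simpa using this
    have hd2 : |p.2 - tb| ≤ pnorm (p - (zb, tb)) := by
      have := snd_le_pnorm (p - (zb, tb)); simpa using this
    have hplt1 : ‖p.1 - zb‖ < η/2 :=
      lt_of_le_of_lt hd1 (lt_of_lt_of_le hplt (min_le_left _ _))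
    have hplt2 : |p.2 - tb| < η/2 :=
      lt_of_le_of_lt hd2 (lt_of_lt_of_le hplt (min_le_left _ _))
    have hmemCC : ((p.1, p.2), vb) ∈ CC := by
      refine ⟨hp, ?_, ?_, hWj4, hWj5⟩
      · have h1 : p.1 - y = (p.1 - zb) + (zb - y) := by abel
        calc ‖p.1 - y‖ = ‖(p.1 - zb) + (zb - y)‖ := by rw [h1]
          _ ≤ ‖p.1 - zb‖ + ‖zb - y‖ := norm_add_le _ _
          _ ≤ η := by linarith [hzy, hθη]
      · calc |p.2 - r| ≤ |p.2 - tb| + |tb - r| := abs_sub_le _ _ _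
          _ ≤ η := by linarith [htr, hθη]
    have hmin2 : Φ j ((zb, tb), vb) ≤ Φ j ((p.1, p.2), vb) := by
      rw [hWjeta]; exact hWmin j hmemCC
    simp only [hΦdef] at hmin2
    have exp1 : ‖p.1 - vb‖^2 = ‖zb - vb‖^2 + 2*⟪zb - vb, p.1 - zb⟫ + ‖p.1 - zb‖^2 :=
      sq_expand p.1 zb vb
    have exp2 : ‖p.1 - y‖^2 = ‖zb - y‖^2 + 2*⟪zb - y, p.1 - zb⟫ + ‖p.1 - zb‖^2 :=
      sq_expand p.1 zb y
    have exp3 : (p.2 - r)^2 = (tb - r)^2 + 2*(tb - r)*(p.2 - tb) + (p.2 - tb)^2 := by ring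
    rw [exp1, exp2, exp3] at hmin2
    have hpin : pinner (-((2*((j:ℝ)+1)) • (zb - vb)) - (2:ℝ) • (zb - y), -1 - 2*(tb - r))
        (p - (zb, tb))
        = -(((j:ℝ)+1)*(2*⟪zb - vb, p.1 - zb⟫)) - 2*⟪zb - y, p.1 - zb⟫
          + (-1 - 2*(tb - r))*(p.2 - tb) := by
      have e0 : (-((2*((j:ℝ)+1)) • (zb - vb)) - (2:ℝ) • (zb - y) : Eu n)
          = (-(2*((j:ℝ)+1))) • (zb - vb) + (-2 : ℝ) • (zb - y) := by module
      simp only [pinner, Prod.fst_sub, Prod.snd_sub, e0, inner_add_left,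
        real_inner_smul_left]
      ring
    rw [hpin]
    have hps : pnorm (p - (zb, tb))^2 = ‖p.1 - zb‖^2 + (p.2 - tb)^2 := by
      rw [pnorm_sq]; simp
    have hkey : -(((j:ℝ)+1)*(2*⟪zb - vb, p.1 - zb⟫)) - 2*⟪zb - y, p.1 - zb⟫
        + (-1 - 2*(tb - r))*(p.2 - tb) ≤ (((j:ℝ)+2)) * pnorm (p - (zb, tb))^2 := by
      rw [hps]
      linarith [hmin2, mul_nonneg (by positivity : (0:ℝ) ≤ (j:ℝ)+1) (sq_nonneg (p.2 - tb)),
        mul_nonneg (by positivity : (0:ℝ) ≤ (j:ℝ)+1) (sq_nonneg ‖p.1 - zb‖)]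
    have hq : pnorm (p - (zb, tb)) ≤ ε'/((j:ℝ)+2) :=
      le_of_lt (lt_of_lt_of_le hplt (min_le_right _ _))
    have h8 : ((j:ℝ)+2) * pnorm (p - (zb, tb)) ≤ ε' := by
      have := (le_div_iff₀ (by positivity : (0:ℝ) < (j:ℝ)+2)).mp hq
      linarith
    have h9 : ((j:ℝ)+2) * pnorm (p - (zb, tb))^2 ≤ ε' * pnorm (p - (zb, tb)) := by
      have h10 : ((j:ℝ)+2) * pnorm (p - (zb, tb))^2
          = (((j:ℝ)+2) * pnorm (p - (zb, tb))) * pnorm (p - (zb, tb)) := by ring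
      rw [h10]
      exact mul_le_mul_of_nonneg_right h8 hq0
    linarith
  · -- frechetNC membership
    refine ⟨hWj4, ?_⟩
    intro ε' hε'
    have hcρ : 0 < c + ((j:ℝ)+1) + 1 := by positivity
    refine ⟨min (η/2) (ε'/(c+((j:ℝ)+1)+1)), lt_min (by positivity) (by positivity), ?_⟩
    intro v hvΩ hvlt
    have hq0 := norm_nonneg (v - vb)
    have hvlt1 : ‖v - vb‖ < η/2 := lt_of_lt_of_le hvlt (min_le_left _ _)
    have hmemCC : ((zb, tb), v) ∈ CC := by
      refine ⟨hWj1, hWj2, hWj3, hvΩ, ?_⟩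
      have h1 : v - y = (v - vb) + (vb - y) := by abel
      calc ‖v - y‖ = ‖(v - vb) + (vb - y)‖ := by rw [h1]
        _ ≤ ‖v - vb‖ + ‖vb - y‖ := norm_add_le _ _
        _ ≤ η := by linarith [hvy, hθη]
    have hmin2 : Φ j ((zb, tb), vb) ≤ Φ j ((zb, tb), v) := by
      rw [hWjeta]; exact hWmin j hmemCC
    simp only [hΦdef] at hmin2
    have eno1 : ‖zb - v‖ = ‖v - zb‖ := norm_sub_rev _ _
    have eno2 : ‖zb - vb‖ = ‖vb - zb‖ := norm_sub_rev _ _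
    rw [eno1, eno2] at hmin2
    have exp1 : ‖v - x‖^2 = ‖vb - x‖^2 + 2*⟪vb - x, v - vb⟫ + ‖v - vb‖^2 :=
      sq_expand v vb x
    have exp2 : ‖v - zb‖^2 = ‖vb - zb‖^2 + 2*⟪vb - zb, v - vb⟫ + ‖v - vb‖^2 :=
      sq_expand v vb zb
    have exp3 : ‖v - y‖^2 = ‖vb - y‖^2 + 2*⟪vb - y, v - vb⟫ + ‖v - vb‖^2 :=
      sq_expand v vb y
    rw [exp1, exp2, exp3] at hmin2
    have hpin : ⟪(2*((j:ℝ)+1)) • (zb - vb) - ((2*c) • (vb - x) + (2:ℝ) • (vb - y)), v - vb⟫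
        = -(((j:ℝ)+1)*(2*⟪vb - zb, v - vb⟫)) - c*(2*⟪vb - x, v - vb⟫)
          - 2*⟪vb - y, v - vb⟫ := by
      have e0 : ((2*((j:ℝ)+1)) • (zb - vb) - ((2*c) • (vb - x) + (2:ℝ) • (vb - y)) : Eu n)
          = (-(2*((j:ℝ)+1))) • (vb - zb) + ((-(2*c)) • (vb - x) + (-2 : ℝ) • (vb - y)) := by
        module
      rw [e0, inner_add_left, inner_add_left, real_inner_smul_left,
        real_inner_smul_left, real_inner_smul_left]
      ring
    rw [hpin]
    have hkey : -(((j:ℝ)+1)*(2*⟪vb - zb, v - vb⟫)) - c*(2*⟪vb - x, v - vb⟫)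
        - 2*⟪vb - y, v - vb⟫ ≤ (c+((j:ℝ)+1)+1) * ‖v - vb‖^2 := by
      linarith [hmin2]
    have hq : ‖v - vb‖ ≤ ε'/(c+((j:ℝ)+1)+1) :=
      le_of_lt (lt_of_lt_of_le hvlt (min_le_right _ _))
    have h8 : (c+((j:ℝ)+1)+1) * ‖v - vb‖ ≤ ε' := by
      have := (le_div_iff₀ hcρ).mp hq
      linarith
    have h9 : (c+((j:ℝ)+1)+1) * ‖v - vb‖^2 ≤ ε' * ‖v - vb‖ := by
      have h10 : (c+((j:ℝ)+1)+1) * ‖v - vb‖^2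
          = ((c+((j:ℝ)+1)+1) * ‖v - vb‖) * ‖v - vb‖ := by ring
      rw [h10]
      exact mul_le_mul_of_nonneg_right h8 hq0
    linarith
  · linarith [hzy, hθδ]
  · linarith [hvy, hθδ]
  · rw [norm_smul]
    simp only [Real.norm_eq_abs]
    rw [abs_of_nonneg (by norm_num : (0:ℝ) ≤ 2)]
    linarith [hzy, hθδ]
  · rw [abs_mul, abs_of_nonneg (by norm_num : (0:ℝ) ≤ 2)]
    linarith [htr, hθδ]
  · -- bound on E
    have hvbx : ‖vb - x‖ ≤ θ + lam := by
      have h1 : vb - x = (vb - y) + (y - x) := by abel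
      calc ‖vb - x‖ = ‖(vb - y) + (y - x)‖ := by rw [h1]
        _ ≤ ‖vb - y‖ + ‖y - x‖ := norm_add_le _ _
        _ ≤ θ + lam := by linarith [hvy, hyx]
    have hclam : c * lam = 2*ε/d := by
      rw [hcdef, hlam]; field_simp
    have hθlam : θ ≤ lam/4 := by linarith [hθη, hηlam]
    have h1 : ‖(2*c) • (vb - x) + (2:ℝ) • (vb - y)‖
        ≤ ‖(2*c) • (vb - x)‖ + ‖(2:ℝ) • (vb - y)‖ := norm_add_le _ _
    have h2 : ‖(2*c) • (vb - x)‖ = 2*c*‖vb - x‖ := by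
      rw [norm_smul]; simp only [Real.norm_eq_abs]
      rw [abs_of_nonneg (by positivity : (0:ℝ) ≤ 2*c)]
    have h3 : ‖(2:ℝ) • (vb - y)‖ = 2*‖vb - y‖ := by
      rw [norm_smul]; simp only [Real.norm_eq_abs]
      rw [abs_of_nonneg (by norm_num : (0:ℝ) ≤ 2)]
    have h4 : 2*c*‖vb - x‖ ≤ 2*c*(θ + lam) :=
      mul_le_mul_of_nonneg_left hvbx (by positivity)
    have h5 : 2*c*(θ + lam) ≤ 2*c*(lam/4 + lam) :=
      mul_le_mul_of_nonneg_left (by linarith) (by positivity)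
    have h6 : 2*c*(lam/4 + lam) = (5/2)*(c*lam) := by ring
    have h7 : (5/2)*(c*lam) = 5*ε/d := by rw [hclam]; ring
    have h8 : 5*ε/d ≤ 6*ε/d := by
      have h0 : 0 ≤ ε/d := by positivity
      calc 5*ε/d = 5*(ε/d) := by ring
        _ ≤ 6*(ε/d) := by linarith
        _ = 6*ε/d := by ring
    calc ‖(2*c) • (vb - x) + (2:ℝ) • (vb - y)‖
        ≤ 2*c*‖vb - x‖ + 2*‖vb - y‖ := by rw [← h2, ← h3]; exact h1
      _ ≤ 6*ε/d + 2*δ := by linarith [hvy, hθδ]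
  · rw [norm_sub_rev]
    rw [hlam] at hyx
    exact hyx

lemma tendsto_of_bound {EE : Type*} [NormedAddCommGroup EE] (C : ℝ) (f : ℕ → EE)
    (hf : ∀ k, ‖f k‖ ≤ C/((k:ℝ)+1)) {ψ : ℕ → ℕ} (hψ : Tendsto ψ atTop atTop) :
    Tendsto (fun k => f (ψ k)) atTop (𝓝 0) := by
  have h3 : Tendsto (fun j : ℕ => ((j:ℝ)+1)) atTop atTop :=
    tendsto_atTop_add_const_right _ _ tendsto_natCast_atTop_atTop
  have h1 : Tendsto (fun j : ℕ => C/((j:ℝ)+1)) atTop (𝓝 0) := by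
    have h4 := (tendsto_const_nhds (x := C) (f := atTop (α := ℕ))).mul h3.inv_tendsto_atTop
    simpa [div_eq_mul_inv] using h4
  exact squeeze_zero_norm (fun k => hf (ψ k)) (h1.comp hψ)

set_option maxHeartbeats 1600000 in
/-- Error bound at infinity for the constraint set
`S = {x ∈ Ω : g(x) ≤ 0}`. -/
theorem error_bound_at_infinity {n : ℕ} (g : Eu n → EReal)
    (hg : LowerSemicontinuous g) (hgbot : ∀ x, g x ≠ ⊥)
    (Ω : Set (Eu n)) (hΩne : Ω.Nonempty) (hΩcl : IsClosed Ω)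
    (hunb : ¬ Bornology.IsBounded (Ω ∩ {x | g x < ⊤}))
    (hSne : {x | x ∈ Ω ∧ g x ≤ 0}.Nonempty)
    (hqc : ∀ u ∈ asymptoticConeEu Ω, ‖u‖ = 1 →
      dirSingSubdiffInfty g u ∩ -dirNCInfty Ω u = {0} ∧
      (0 : Eu n) ∉ dirSubdiffInfty g u + dirNCInfty Ω u) :
    ∃ α > (0 : ℝ), ∃ R > (0 : ℝ), ∀ x ∈ Ω, R < ‖x‖ →
      ((Metric.infDist x {y | y ∈ Ω ∧ g y ≤ 0} : ℝ) : EReal) ≤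
        (α : EReal) * max (g x) 0 := by
  by_contra hcon
  push_neg at hcon
  obtain ⟨sbar, hsbarΩ, hsbarg⟩ := hSne
  set S : Set (Eu n) := {y | y ∈ Ω ∧ g y ≤ 0} with hSdef
  have hstep : ∀ k : ℕ, ∃ x, x ∈ Ω ∧ ((k:ℝ)+1) < ‖x‖ ∧
      ((((k:ℝ)+1) : ℝ) : EReal) * max (g x) 0 < ((Metric.infDist x S : ℝ) : EReal) := by
    intro k
    obtain ⟨x, hx1, hx2, hx3⟩ := hcon ((k:ℝ)+1) (by positivity) ((k:ℝ)+1) (by positivity)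
    exact ⟨x, hx1, hx2, hx3⟩
  choose X hXΩ hXnorm hXlt using hstep
  -- basic facts about g (X k)
  have hXfacts : ∀ k : ℕ, 0 < (g (X k)).toReal ∧ g (X k) = (((g (X k)).toReal : ℝ) : EReal) ∧
      (((k:ℝ)+1) * (g (X k)).toReal) < Metric.infDist (X k) S := by
    intro k
    have hlt := hXlt k
    have hcoepos : (0 : EReal) < (((k:ℝ)+1 : ℝ) : EReal) := EReal.coe_pos.mpr (by positivity)
    have htop : g (X k) ≠ ⊤ := by
      intro h
      rw [h] at hlt
      have h1 : max (⊤ : EReal) 0 = ⊤ := max_eq_left le_top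
      rw [h1] at hlt
      rw [EReal.mul_top_of_pos hcoepos] at hlt
      exact not_top_lt hlt
    have hpos : 0 < g (X k) := by
      by_contra h
      push_neg at h
      have hXS : X k ∈ S := ⟨hXΩ k, h⟩
      have h1 : Metric.infDist (X k) S = 0 := Metric.infDist_zero_of_mem hXS
      have h2 : max (g (X k)) 0 = 0 := max_eq_right h
      rw [h1, h2, mul_zero] at hlt
      simp at hlt
    have hcoe : g (X k) = (((g (X k)).toReal : ℝ) : EReal) :=
      (EReal.coe_toReal htop (hgbot _)).symm
    have htReal : 0 < (g (X k)).toReal := by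
      have := hpos
      rw [hcoe] at this
      exact EReal.coe_pos.mp this
    refine ⟨htReal, hcoe, ?_⟩
    have h2 : max (g (X k)) 0 = (((g (X k)).toReal : ℝ) : EReal) := by
      rw [← hcoe]; exact max_eq_left hpos.le
    rw [h2, ← EReal.coe_mul] at hlt
    exact EReal.coe_lt_coe_iff.mp hlt
  set ε : ℕ → ℝ := fun k => (g (X k)).toReal with hεdef
  have hεpos : ∀ k, 0 < ε k := fun k => (hXfacts k).1
  have hdinf : ∀ k : ℕ, ((k:ℝ)+1) * ε k < Metric.infDist (X k) S := fun k => (hXfacts k).2.2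
  have hmain : ∀ k : ℕ, ∃ (z v y : Eu n) (t : ℝ) (P A E : Eu n) (B : ℝ),
      g z ≤ ((t : ℝ) : EReal) ∧ v ∈ Ω ∧ y ∈ Ω ∧
      (-P - A, -1 - B) ∈ frechetNCP (epigraph g) (z, t) ∧
      P - E ∈ frechetNC Ω v ∧
      ‖z - y‖ ≤ 1/((k:ℝ)+1) ∧ ‖v - y‖ ≤ 1/((k:ℝ)+1) ∧ ‖A‖ ≤ 2*(1/((k:ℝ)+1)) ∧
      |B| ≤ 2*(1/((k:ℝ)+1)) ∧
      ‖E‖ ≤ 6*(ε k)/(((k:ℝ)+1)*(ε k)) + 2*(1/((k:ℝ)+1)) ∧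
      ‖X k - y‖ ≤ (((k:ℝ)+1)*(ε k))/2 := by
    intro k
    refine key g hg Ω hΩcl (X k) (hXΩ k) (ε k) (((k:ℝ)+1)*(ε k)) (hεpos k)
      (mul_pos (by positivity) (hεpos k)) (hXfacts k).2.1 ?_ (1/((k:ℝ)+1)) (by positivity)
    intro s hsΩ hgs
    have h1 : s ∈ S := ⟨hsΩ, hgs⟩
    have h2 : Metric.infDist (X k) S ≤ dist (X k) s := Metric.infDist_le_dist_of_mem h1
    rw [dist_eq_norm] at h2
    linarith [hdinf k]
  choose Z V Y T P A E B hgZT hVΩ hYΩ hNCP hNC hZY hVY hAb hBb hEb hXY using hmain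
  -- simplified bounds
  have hb1 : ∀ j : ℕ, (0:ℝ) < (j:ℝ)+1 := fun j => by positivity
  have hble : ∀ (c : ℝ) (j : ℕ), 0 ≤ c → c/((j:ℝ)+1) ≤ c := by
    intro c j hc
    rw [div_le_iff₀ (hb1 j)]
    nlinarith [Nat.cast_nonneg (α := ℝ) j]
  have hA' : ∀ k : ℕ, ‖A k‖ ≤ 2/((k:ℝ)+1) := by
    intro k; have h := hAb k; rw [mul_one_div] at h; exact h
  have hB' : ∀ k : ℕ, ‖B k‖ ≤ 2/((k:ℝ)+1) := by
    intro k; have h := hBb k; rw [mul_one_div] at h; rwa [Real.norm_eq_abs]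
  have hE' : ∀ k : ℕ, ‖E k‖ ≤ 8/((k:ℝ)+1) := by
    intro k
    have h1 := hEb k
    have h0 : ε k ≠ 0 := (hεpos k).ne'
    have h00 : ((k:ℝ)+1) ≠ 0 := (hb1 k).ne'
    have h2 : 6*(ε k)/(((k:ℝ)+1)*(ε k)) = 6/((k:ℝ)+1) := by
      field_simp
    rw [h2, mul_one_div] at h1
    have h3 : 6/((k:ℝ)+1) + 2/((k:ℝ)+1) = 8/((k:ℝ)+1) := by ring
    linarith
  have hZY1 : ∀ k : ℕ, ‖Z k - Y k‖ ≤ 1 := by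
    intro k
    have h1 := hZY k
    have h2 : 1/((k:ℝ)+1) ≤ 1 := hble 1 k one_pos.le
    linarith
  have hVY1 : ∀ k : ℕ, ‖V k - Y k‖ ≤ 1 := by
    intro k
    have h1 := hVY k
    have h2 : 1/((k:ℝ)+1) ≤ 1 := hble 1 k one_pos.le
    linarith
  -- growth of ‖Y k‖
  have hYlow : ∀ k : ℕ, ((k:ℝ)+1)/2 - ‖sbar‖/2 ≤ ‖Y k‖ := by
    intro k
    have h1 := hXY k
    have h2 : Metric.infDist (X k) S ≤ dist (X k) sbar :=
      Metric.infDist_le_dist_of_mem ⟨hsbarΩ, hsbarg⟩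
    have h3 : dist (X k) sbar ≤ ‖X k‖ + ‖sbar‖ := by
      rw [dist_eq_norm]; exact norm_sub_le _ _
    have h4 := hdinf k
    have h5 := norm_sub_norm_le (X k) (Y k)
    have h6 := hXnorm k
    linarith
  have hYtend : Tendsto (fun k => ‖Y k‖) atTop atTop := by
    apply tendsto_atTop_mono hYlow
    have h1 : Tendsto (fun k : ℕ => ((k:ℝ)+1)) atTop atTop :=
      tendsto_atTop_add_const_right _ _ tendsto_natCast_atTop_atTop
    have h2 : Tendsto (fun k : ℕ => ((k:ℝ)+1)/2) atTop atTop :=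
      h1.atTop_div_const (by norm_num)
    exact tendsto_atTop_add_const_right _ _ h2
  -- direction at infinity
  have hUball : ∀ k : ℕ, ‖Y k‖⁻¹ • Y k ∈ Metric.closedBall (0 : Eu n) 1 := by
    intro k
    rw [Metric.mem_closedBall, dist_zero_right, norm_smul, Real.norm_eq_abs, abs_inv, abs_norm]
    rcases eq_or_ne (‖Y k‖) 0 with h | h
    · rw [h]; norm_num
    · rw [inv_mul_cancel₀ h]
  obtain ⟨u, huball, φ₀, hφ₀mono, hφ₀conv⟩ :=
    (isCompact_closedBall (0 : Eu n) 1).tendsto_subseq hUball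
  have hφ₀tend : Tendsto φ₀ atTop atTop := hφ₀mono.tendsto_atTop
  have hunorm : ‖u‖ = 1 := by
    have h1 : Tendsto (fun k => ‖((fun k => ‖Y k‖⁻¹ • Y k) ∘ φ₀) k‖) atTop (𝓝 ‖u‖) :=
      (continuous_norm.tendsto u).comp hφ₀conv
    have h2 : (fun k => ‖((fun k => ‖Y k‖⁻¹ • Y k) ∘ φ₀) k‖) =ᶠ[atTop] (fun _ => (1:ℝ)) := by
      filter_upwards [(hYtend.comp hφ₀tend).eventually_ge_atTop 1] with k hk
      simp only [Function.comp_apply] at hk ⊢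
      have h0 : ‖Y (φ₀ k)‖ ≠ 0 := by intro hc; rw [hc] at hk; linarith
      rw [norm_smul, Real.norm_eq_abs, abs_inv, abs_norm, inv_mul_cancel₀ h0]
    have h3 := h1.congr' h2
    exact tendsto_nhds_unique h3 tendsto_const_nhds
  have huAC : u ∈ asymptoticConeEu Ω := by
    refine ⟨fun k => ‖Y (φ₀ k)‖, fun k => Y (φ₀ k), hYtend.comp hφ₀tend,
      fun k => hYΩ (φ₀ k), ?_⟩
    exact hφ₀conv
  obtain ⟨hq1, hq2⟩ := hqc u huAC hunorm
  by_cases hbd : ∃ C, ∃ᶠ k in atTop, ‖P (φ₀ k)‖ ≤ C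
  · -- bounded case : contradiction with the noncriticality condition
    obtain ⟨C, hC⟩ := hbd
    obtain ⟨φ₁, hφ₁mono, hφ₁prop⟩ := Filter.extraction_of_frequently_atTop hC
    obtain ⟨pstar, hpstarball, φ₂, hφ₂mono, hφ₂conv⟩ :=
      (isCompact_closedBall (0 : Eu n) C).tendsto_subseq
        (x := fun k => P (φ₀ (φ₁ k)))
        (fun k => mem_closedBall_zero_iff.mpr (hφ₁prop k))
    have hφ₁₂tend : Tendsto (fun k => φ₁ (φ₂ k)) atTop atTop :=
      (hφ₁mono.tendsto_atTop).comp hφ₂mono.tendsto_atTop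
    have hΨtend : Tendsto (fun k => φ₀ (φ₁ (φ₂ k))) atTop atTop :=
      hφ₀tend.comp hφ₁₂tend
    have hPconv : Tendsto (fun k => P (φ₀ (φ₁ (φ₂ k)))) atTop (𝓝 pstar) := hφ₂conv
    have hdirZ : TendstoDirInfty (fun k => Z (φ₀ (φ₁ (φ₂ k)))) u := by
      apply dir_tendsto (y := fun k => Y (φ₀ (φ₁ (φ₂ k))))
        (fun k => hZY1 _) (hYtend.comp hΨtend)
      exact hφ₀conv.comp hφ₁₂tend
    have hdirV : TendstoDirInfty (fun k => V (φ₀ (φ₁ (φ₂ k)))) u := by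
      apply dir_tendsto (y := fun k => Y (φ₀ (φ₁ (φ₂ k))))
        (fun k => hVY1 _) (hYtend.comp hΨtend)
      exact hφ₀conv.comp hφ₁₂tend
    have hA0 : Tendsto (fun k => A (φ₀ (φ₁ (φ₂ k)))) atTop (𝓝 0) :=
      tendsto_of_bound 2 A hA' hΨtend
    have hB0 : Tendsto (fun k => B (φ₀ (φ₁ (φ₂ k)))) atTop (𝓝 0) :=
      tendsto_of_bound 2 B hB' hΨtend
    have hE0 : Tendsto (fun k => E (φ₀ (φ₁ (φ₂ k)))) atTop (𝓝 0) :=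
      tendsto_of_bound 8 E hE' hΨtend
    have hsub : -pstar ∈ dirSubdiffInfty g u := by
      refine ⟨fun k => Z (φ₀ (φ₁ (φ₂ k))), fun k => T (φ₀ (φ₁ (φ₂ k))),
        fun k => (-(P (φ₀ (φ₁ (φ₂ k)))) - A (φ₀ (φ₁ (φ₂ k))),
          -1 - B (φ₀ (φ₁ (φ₂ k)))), hdirZ,
        fun k => hgZT _, fun k => hNCP _, ?_⟩
      have hfst : Tendsto (fun k => -(P (φ₀ (φ₁ (φ₂ k)))) - A (φ₀ (φ₁ (φ₂ k)))) atTop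
          (𝓝 (-pstar)) := by
        have h := (hPconv.neg).sub hA0
        simpa using h
      have hsnd : Tendsto (fun k => -1 - B (φ₀ (φ₁ (φ₂ k)))) atTop (𝓝 (-1 : ℝ)) := by
        have h := (tendsto_const_nhds (x := (-1:ℝ)) (f := atTop (α := ℕ))).sub hB0
        simpa using h
      exact hfst.prodMk_nhds hsnd
    have hnc : pstar ∈ dirNCInfty Ω u := by
      refine ⟨fun k => V (φ₀ (φ₁ (φ₂ k))),
        fun k => P (φ₀ (φ₁ (φ₂ k))) - E (φ₀ (φ₁ (φ₂ k))), fun k => hVΩ _, hdirV,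
        fun k => hNC _, ?_⟩
      have h := hPconv.sub hE0
      simpa using h
    apply hq2
    have h0 := Set.add_mem_add hsub hnc
    have h1 : -pstar + pstar = (0 : Eu n) := by abel
    rwa [h1] at h0
  · -- unbounded case : contradiction with the singular condition
    push_neg at hbd
    have hPtop : Tendsto (fun k => ‖P (φ₀ k)‖) atTop atTop := by
      rw [tendsto_atTop]
      intro C
      have h := hbd C
      exact h.mono fun k hk => hk.le
    have hQball : ∀ k : ℕ, ‖P (φ₀ k)‖⁻¹ • P (φ₀ k) ∈ Metric.closedBall (0 : Eu n) 1 := by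
      intro k
      rw [Metric.mem_closedBall, dist_zero_right, norm_smul, Real.norm_eq_abs, abs_inv, abs_norm]
      rcases eq_or_ne (‖P (φ₀ k)‖) 0 with h | h
      · rw [h]; norm_num
      · rw [inv_mul_cancel₀ h]
    obtain ⟨q, hqball, φ₁, hφ₁mono, hφ₁conv⟩ :=
      (isCompact_closedBall (0 : Eu n) 1).tendsto_subseq hQball
    have hφ₁tend : Tendsto φ₁ atTop atTop := hφ₁mono.tendsto_atTop
    have hΨtend : Tendsto (fun k => φ₀ (φ₁ k)) atTop atTop := hφ₀tend.comp hφ₁tend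
    have hPΨtop : Tendsto (fun k => ‖P (φ₀ (φ₁ k))‖) atTop atTop := hPtop.comp hφ₁tend
    have hQconv : Tendsto (fun k => ‖P (φ₀ (φ₁ k))‖⁻¹ • P (φ₀ (φ₁ k))) atTop (𝓝 q) := hφ₁conv
    have hqnorm : ‖q‖ = 1 := by
      have h1 : Tendsto (fun k => ‖‖P (φ₀ (φ₁ k))‖⁻¹ • P (φ₀ (φ₁ k))‖) atTop (𝓝 ‖q‖) :=
        (continuous_norm.tendsto q).comp hQconv
      have h2 : (fun k => ‖‖P (φ₀ (φ₁ k))‖⁻¹ • P (φ₀ (φ₁ k))‖) =ᶠ[atTop] (fun _ => (1:ℝ)) := by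
        filter_upwards [hPΨtop.eventually_ge_atTop 1] with k hk
        have h0 : ‖P (φ₀ (φ₁ k))‖ ≠ 0 := by intro hc; rw [hc] at hk; linarith
        rw [norm_smul, Real.norm_eq_abs, abs_inv, abs_norm, inv_mul_cancel₀ h0]
      exact tendsto_nhds_unique (h1.congr' h2) tendsto_const_nhds
    have hc0 : Tendsto (fun k => ‖P (φ₀ (φ₁ k))‖⁻¹) atTop (𝓝 0) := hPΨtop.inv_tendsto_atTop
    have hcnn : ∀ k : ℕ, (0:ℝ) ≤ ‖P (φ₀ (φ₁ k))‖⁻¹ := fun k => inv_nonneg.mpr (norm_nonneg _)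
    have hdirZ : TendstoDirInfty (fun k => Z (φ₀ (φ₁ k))) u := by
      apply dir_tendsto (y := fun k => Y (φ₀ (φ₁ k))) (fun k => hZY1 _) (hYtend.comp hΨtend)
      exact hφ₀conv.comp hφ₁tend
    have hdirV : TendstoDirInfty (fun k => V (φ₀ (φ₁ k))) u := by
      apply dir_tendsto (y := fun k => Y (φ₀ (φ₁ k))) (fun k => hVY1 _) (hYtend.comp hΨtend)
      exact hφ₀conv.comp hφ₁tend
    have hsing : -q ∈ dirSingSubdiffInfty g u := by
      refine ⟨fun k => Z (φ₀ (φ₁ k)), fun k => T (φ₀ (φ₁ k)),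
        fun k => (‖P (φ₀ (φ₁ k))‖⁻¹ • (-(P (φ₀ (φ₁ k))) - A (φ₀ (φ₁ k))),
          ‖P (φ₀ (φ₁ k))‖⁻¹ * (-1 - B (φ₀ (φ₁ k)))),
        hdirZ, fun k => hgZT _, fun k => frechetNCP_smul_mem (hNCP _) (hcnn k), ?_⟩
      have hfst : Tendsto (fun k => ‖P (φ₀ (φ₁ k))‖⁻¹ • (-(P (φ₀ (φ₁ k))) - A (φ₀ (φ₁ k))))
          atTop (𝓝 (-q)) := by
        have h2 : Tendsto (fun k => ‖P (φ₀ (φ₁ k))‖⁻¹ • A (φ₀ (φ₁ k))) atTop (𝓝 0) := by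
          apply squeeze_zero_norm (a := fun k => 2 * ‖P (φ₀ (φ₁ k))‖⁻¹) ?_ ?_
          · intro k
            rw [norm_smul, Real.norm_eq_abs, abs_inv, abs_norm]
            have h3 : ‖A (φ₀ (φ₁ k))‖ ≤ 2 := le_trans (hA' _) (hble 2 _ (by norm_num))
            calc ‖P (φ₀ (φ₁ k))‖⁻¹ * ‖A (φ₀ (φ₁ k))‖ ≤ ‖P (φ₀ (φ₁ k))‖⁻¹ * 2 :=
                  mul_le_mul_of_nonneg_left h3 (hcnn k)
              _ = 2 * ‖P (φ₀ (φ₁ k))‖⁻¹ := by ring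
          · have h4 := (tendsto_const_nhds (x := (2:ℝ)) (f := atTop (α := ℕ))).mul hc0
            simpa using h4
        have h5 := hQconv.neg.sub h2
        rw [sub_zero] at h5
        apply h5.congr
        intro k
        rw [smul_sub, smul_neg]
      have hsnd : Tendsto (fun k => ‖P (φ₀ (φ₁ k))‖⁻¹ * (-1 - B (φ₀ (φ₁ k)))) atTop
          (𝓝 (0 : ℝ)) := by
        apply squeeze_zero_norm (a := fun k => 3 * ‖P (φ₀ (φ₁ k))‖⁻¹) ?_ ?_
        · intro k
          rw [Real.norm_eq_abs, abs_mul, abs_inv, abs_norm]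
          have h5 : |B (φ₀ (φ₁ k))| ≤ 2 := by
            have h4 := hB' (φ₀ (φ₁ k))
            rw [Real.norm_eq_abs] at h4
            exact le_trans h4 (hble 2 _ (by norm_num))
          have h3 : |(-1 - B (φ₀ (φ₁ k)))| ≤ 3 := by
            have he : (-1 - B (φ₀ (φ₁ k))) = -(1 + B (φ₀ (φ₁ k))) := by ring
            rw [he, abs_neg]
            calc |1 + B (φ₀ (φ₁ k))| ≤ |(1:ℝ)| + |B (φ₀ (φ₁ k))| := abs_add_le _ _
              _ ≤ 3 := by rw [abs_one]; linarith
          calc ‖P (φ₀ (φ₁ k))‖⁻¹ * |(-1 - B (φ₀ (φ₁ k)))| ≤ ‖P (φ₀ (φ₁ k))‖⁻¹ * 3 :=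
                mul_le_mul_of_nonneg_left h3 (hcnn k)
            _ = 3 * ‖P (φ₀ (φ₁ k))‖⁻¹ := by ring
        · have h4 := (tendsto_const_nhds (x := (3:ℝ)) (f := atTop (α := ℕ))).mul hc0
          simpa using h4
      exact hfst.prodMk_nhds hsnd
    have hncq : q ∈ dirNCInfty Ω u := by
      refine ⟨fun k => V (φ₀ (φ₁ k)),
        fun k => ‖P (φ₀ (φ₁ k))‖⁻¹ • (P (φ₀ (φ₁ k)) - E (φ₀ (φ₁ k))), fun k => hVΩ _,
        hdirV, fun k => frechetNC_smul_mem (hNC _) (hcnn k), ?_⟩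
      have h2 : Tendsto (fun k => ‖P (φ₀ (φ₁ k))‖⁻¹ • E (φ₀ (φ₁ k))) atTop (𝓝 0) := by
        apply squeeze_zero_norm (a := fun k => 8 * ‖P (φ₀ (φ₁ k))‖⁻¹) ?_ ?_
        · intro k
          rw [norm_smul, Real.norm_eq_abs, abs_inv, abs_norm]
          have h3 : ‖E (φ₀ (φ₁ k))‖ ≤ 8 := le_trans (hE' _) (hble 8 _ (by norm_num))
          calc ‖P (φ₀ (φ₁ k))‖⁻¹ * ‖E (φ₀ (φ₁ k))‖ ≤ ‖P (φ₀ (φ₁ k))‖⁻¹ * 8 :=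
                mul_le_mul_of_nonneg_left h3 (hcnn k)
            _ = 8 * ‖P (φ₀ (φ₁ k))‖⁻¹ := by ring
        · have h4 := (tendsto_const_nhds (x := (8:ℝ)) (f := atTop (α := ℕ))).mul hc0
          simpa using h4
      have h5 := hQconv.sub h2
      rw [sub_zero] at h5
      apply h5.congr
      intro k
      rw [smul_sub]
    have hmem : -q ∈ dirSingSubdiffInfty g u ∩ -dirNCInfty Ω u :=
      ⟨hsing, Set.mem_neg.mpr (by rwa [neg_neg])⟩
    rw [hq1] at hmem
    have hq0 : q = 0 := neg_eq_zero.mp (Set.mem_singleton_iff.mp hmem)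
    rw [hq0] at hqnorm
    simp at hqnorm
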